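/- arXiv:2503.19927 — 10 statements merged into one kernel-verified Lean document; each statement's English description precedes it below -/
import Mathlib

section
/- Let G=(V,E) be a directed, strongly connected graph on N nodes and let c ∈ ℝ^N be any vector with strictly positive entries. Then there exists an assignment of strictly positive weights w_{ij} to the edges (i,j) ∈ E and a real number λ > 0 such that the weighted adjacency matrix W ∈ ℝ^{N×N} (defined by W_{ij} = w_{ij} if (i,j) ∈ E and W_{ij} = 0 otherwise) satisfies W^T c = λ c; that is, c is the eigenvector centrality of the weighted graph. -/
open Matrix

section BalancingWeights

open Finset

variable {ι : Type*} [Fintype ι] (E : ι → ι → Prop) [DecidableRel E]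

def inDegree (j : ι) : ℕ := #{i | E i j}

theorem inDegree_pos {j : ι} (h : ∃ i, E i j) : 0 < inDegree E j := by
  obtain ⟨i, hi⟩ := h
  exact card_pos.2 ⟨i, mem_filter.2 ⟨mem_univ i, hi⟩⟩

/-- Edge `i → j` gets weight `c j / (inDegree j * c i)`, so that each of the `inDegree j`
edges into `j` contributes exactly `c j / inDegree j` to `(Wᵀ c) j`. -/
noncomputable def balancingWeights (c : ι → ℝ) : Matrix ι ι ℝ :=
  of fun i j => if E i j then c j / (inDegree E j * c i) else 0

variable {E}

theorem balancingWeights_pos {c : ι → ℝ} (hc : ∀ i, 0 < c i) {i j : ι} (h : E i j) :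
    0 < balancingWeights E c i j := by
  rw [balancingWeights, of_apply, if_pos h]
  have hd : (0 : ℝ) < inDegree E j := by exact_mod_cast inDegree_pos E ⟨i, h⟩
  exact div_pos (hc j) (mul_pos hd (hc i))

theorem balancingWeights_eq_zero (c : ι → ℝ) {i j : ι} (h : ¬ E i j) :
    balancingWeights E c i j = 0 := by
  rw [balancingWeights, of_apply, if_neg h]

theorem transpose_balancingWeights_mulVec {c : ι → ℝ} (hc : ∀ i, 0 < c i)
    (hin : ∀ j, ∃ i, E i j) : (balancingWeights E c)ᵀ *ᵥ c = c := by
  funext j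
  have hd : (inDegree E j : ℝ) ≠ 0 := by exact_mod_cast (inDegree_pos E (hin j)).ne'
  have hterm : ∀ i, c i * balancingWeights E c i j = if E i j then c j / inDegree E j else 0 := by
    intro i
    rw [balancingWeights, of_apply, mul_ite, mul_zero]
    congr 1
    field_simp [(hc i).ne']
  calc ((balancingWeights E c)ᵀ *ᵥ c) j
      = ∑ i, if E i j then c j / inDegree E j else 0 := by
        simp only [mulVec_transpose, vecMul, dotProduct, hterm]
    _ = inDegree E j * (c j / inDegree E j) := by
        rw [sum_ite, sum_const_zero, add_zero, sum_const, nsmul_eq_mul]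
        rfl
    _ = c j := mul_div_cancel₀ _ hd

end BalancingWeights

/-- Given a strongly connected directed graph `E` on `N` nodes (strong
connectivity: a directed path between any ordered pair of nodes, i.e. `Relation.TransGen E`)
and any strictly positive vector `c`, there is an assignment of strictly positive weights to
the edges (zero off the edges) and a `λ > 0` such that `Wᵀ c = λ c`, i.e. `c` is the
eigenvector centrality of the weighted graph. -/
theorem weight_tuning_control {N : ℕ} (E : Fin N → Fin N → Prop)
    (hconn : ∀ i j : Fin N, Relation.TransGen E i j)
    (c : Fin N → ℝ) (hc : ∀ i, 0 < c i) :
    ∃ (W : Matrix (Fin N) (Fin N) ℝ) (lam : ℝ),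
      0 < lam ∧
      (∀ i j, E i j → 0 < W i j) ∧
      (∀ i j, ¬ E i j → W i j = 0) ∧
      Wᵀ.mulVec c = lam • c := by
  classical
  have hin : ∀ j, ∃ i, E i j := fun j =>
    let ⟨i, _, hij⟩ := Relation.TransGen.tail'_iff.1 (hconn j j)
    ⟨i, hij⟩
  refine ⟨balancingWeights E c, 1, one_pos, fun i j => balancingWeights_pos hc,
    fun i j => balancingWeights_eq_zero c, ?_⟩
  rw [one_smul]
  exact transpose_balancingWeights_mulVec hc hin
end

section
/- Let P ∈ ℝ^{N×N} be a row-stochastic matrix, let α ∈ (0,1), and let π_0 be a probability vector. Then there exists a probability vector v such that the PageRank vector satisfies π(α,v) = π_0 if and only if (π_0)_j > α (π_0^T P)_j for every j ∈ {1,...,N}. -/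
open Matrix

/-- `P` is row-stochastic: nonnegative entries, each row summing to 1. -/
def IsStochastic {N : ℕ} (P : Matrix (Fin N) (Fin N) ℝ) : Prop :=
  (∀ i j, 0 ≤ P i j) ∧ ∀ i, ∑ j, P i j = 1

/-- `v` is a probability vector: strictly positive entries summing to 1. -/
def IsProbVec {N : ℕ} (v : Fin N → ℝ) : Prop :=
  (∀ i, 0 < v i) ∧ ∑ i, v i = 1

/-- The Google matrix `αP + (1-α) e vᵀ`. -/
def googleMatrix {N : ℕ} (α : ℝ) (P : Matrix (Fin N) (Fin N) ℝ) (v : Fin N → ℝ) :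
    Matrix (Fin N) (Fin N) ℝ :=
  α • P + (1 - α) • Matrix.of fun _ j => v j

/-! Since `π₀` sums to 1, the fixed-point equation `π₀ᵀ G(α,v) = π₀ᵀ` reads
`α π₀ᵀ P + (1 - α) vᵀ = π₀ᵀ`, which is affine in `v` and forces `v = (π₀ - α Pᵀπ₀) / (1 - α)`.
This candidate always sums to 1, because a row-stochastic `P` preserves the sum of a vector, so it
is a probability vector exactly when its entries are positive, i.e. when `α (π₀ᵀ P)_j < (π₀)_j`. -/

theorem IsStochastic.mem_rowStochastic {N : ℕ} {P : Matrix (Fin N) (Fin N) ℝ}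
    (hP : IsStochastic P) : P ∈ rowStochastic ℝ (Fin N) :=
  mem_rowStochastic_iff_sum.2 hP

theorem IsStochastic.sum_vecMul {N : ℕ} {P : Matrix (Fin N) (Fin N) ℝ} (hP : IsStochastic P)
    (x : Fin N → ℝ) : ∑ j, (x ᵥ* P) j = ∑ i, x i := by
  simp only [← dotProduct_one, ← dotProduct_mulVec, hP.mem_rowStochastic.2]

theorem vecMul_googleMatrix {N : ℕ} (α : ℝ) (P : Matrix (Fin N) (Fin N) ℝ)
    (v x : Fin N → ℝ) :
    x ᵥ* googleMatrix α P v = α • (x ᵥ* P) + ((1 - α) * ∑ i, x i) • v := by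
  have hrankOne : x ᵥ* (of fun _ j => v j) = (∑ i, x i) • v := by
    ext j
    simp only [vecMul, dotProduct, of_apply, Pi.smul_apply, smul_eq_mul, Finset.sum_mul]
  rw [googleMatrix, vecMul_add, vecMul_smul, vecMul_smul, hrankOne, smul_smul]

theorem vecMul_googleMatrix_eq_self_iff {N : ℕ} {α : ℝ} (hα : α ≠ 1)
    (P : Matrix (Fin N) (Fin N) ℝ) (v : Fin N → ℝ) {x : Fin N → ℝ} (hx : ∑ i, x i = 1) :
    x ᵥ* googleMatrix α P v = x ↔ v = (1 - α)⁻¹ • (x - α • (x ᵥ* P)) := by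
  rw [vecMul_googleMatrix, hx, mul_one, eq_inv_smul_iff₀ (sub_ne_zero.2 hα.symm),
    eq_sub_iff_add_eq']

/-- For a row-stochastic `P`, `α ∈ (0,1)` and a probability vector `π₀`, there
exists a probability vector `v` whose PageRank vector is `π₀` (i.e. `π₀` is fixed by the
Google matrix `αP + (1-α) e vᵀ`) if and only if `(π₀)_j > α (π₀ᵀ P)_j` for every `j`. -/
theorem personalization_vector_existence {N : ℕ} (P : Matrix (Fin N) (Fin N) ℝ)
    (hP : IsStochastic P) (α : ℝ) (hα : α ∈ Set.Ioo (0 : ℝ) 1)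
    (π₀ : Fin N → ℝ) (hπ₀ : IsProbVec π₀) :
    (∃ v : Fin N → ℝ, IsProbVec v ∧ Matrix.vecMul π₀ (googleMatrix α P v) = π₀) ↔
      ∀ j, α * Matrix.vecMul π₀ P j < π₀ j := by
  have h1α : 0 < 1 - α := sub_pos.2 hα.2
  simp_rw [vecMul_googleMatrix_eq_self_iff hα.2.ne P _ hπ₀.2, exists_eq_right]
  have hsum : ∑ j, ((1 - α)⁻¹ • (π₀ - α • (π₀ ᵥ* P))) j = 1 := by
    simp only [Pi.smul_apply, Pi.sub_apply, smul_eq_mul, ← Finset.mul_sum,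
      Finset.sum_sub_distrib, hP.sum_vecMul, hπ₀.2]
    field_simp
  rw [IsProbVec, and_iff_left hsum]
  simp only [Pi.smul_apply, Pi.sub_apply, smul_eq_mul,
    mul_pos_iff_of_pos_left (inv_pos.2 h1α), sub_pos]
end

section
/- Let P ∈ ℝ^{N×N} be a row-stochastic matrix, let α_1,...,α_N ∈ (0,1) with 𝒜 = diag(α_1,...,α_N), let w be a probability vector, and let α ∈ (0,1). Define the row vector w_𝒜^T = w^T (I_N − 𝒜P)^{−1}. If w_𝒜^T e_i > α (w_𝒜^T P) e_i for every i ∈ {1,...,N}, then there exists a probability vector v such that the standard PageRank coincides with the node-dependent restart PageRank: π(α,v) = π_NPR(𝒜,w). -/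
open Matrix

/-- The node-dependent restart matrix `𝒜P + (I - 𝒜) e wᵀ`, with `𝒜 = diag(a)`. -/
def nprMatrix {N : ℕ} (a : Fin N → ℝ) (P : Matrix (Fin N) (Fin N) ℝ) (w : Fin N → ℝ) :
    Matrix (Fin N) (Fin N) ℝ :=
  Matrix.diagonal a * P + (1 - Matrix.diagonal a) * Matrix.of fun _ j => w j

lemma det_one_sub_diag_mul_ne_zero {N : ℕ} (P : Matrix (Fin N) (Fin N) ℝ) (a : Fin N → ℝ)
    (hPnn : ∀ i j, 0 ≤ P i j) (hProw : ∀ i, ∑ j, P i j = 1)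
    (ha : ∀ i, a i ∈ Set.Ioo (0:ℝ) 1) :
    ((1 : Matrix (Fin N) (Fin N) ℝ) - Matrix.diagonal a * P).det ≠ 0 := by
  apply det_ne_zero_of_sum_row_lt_diag
  intro k
  have hPle1 : P k k ≤ 1 := by
    have := hProw k
    calc P k k ≤ ∑ j, P k j := Finset.single_le_sum (fun j _ => hPnn k j) (Finset.mem_univ k)
    _ = 1 := this
  have hak := ha k
  have hentry : ∀ i j, ((1 : Matrix (Fin N) (Fin N) ℝ) - Matrix.diagonal a * P) i j
      = (if i = j then 1 else 0) - a i * P i j := by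
    intro i j
    simp [Matrix.sub_apply, Matrix.one_apply, Matrix.diagonal_mul]
  have h1 : ∑ j ∈ Finset.univ.erase k, ‖((1 : Matrix (Fin N) (Fin N) ℝ) - Matrix.diagonal a * P) k j‖
      = a k * (1 - P k k) := by
    rw [show a k * (1 - P k k) = ∑ j ∈ Finset.univ.erase k, a k * P k j by
      rw [← Finset.mul_sum, Finset.sum_erase_eq_sub (Finset.mem_univ k), hProw k]]
    apply Finset.sum_congr rfl
    intro j hj
    rw [hentry, if_neg (Ne.symm (Finset.ne_of_mem_erase hj)), zero_sub, norm_neg,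
      Real.norm_eq_abs, abs_of_nonneg (mul_nonneg hak.1.le (hPnn k j))]
  have h2 : ‖((1 : Matrix (Fin N) (Fin N) ℝ) - Matrix.diagonal a * P) k k‖ = 1 - a k * P k k := by
    rw [hentry, if_pos rfl, Real.norm_eq_abs, abs_of_nonneg]
    nlinarith [hak.2, hPnn k k, hPle1, hak.1]
  rw [h1, h2]
  nlinarith [hak.2, hPnn k k, hPle1, hak.1]

/-- Let `P` be row-stochastic, `a i ∈ (0,1)` node-dependent dampings with
`𝒜 = diag(a)`, `w` a probability vector, `α ∈ (0,1)`, and `w_𝒜ᵀ = wᵀ (I - 𝒜P)⁻¹`.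
If `w_𝒜ᵀ e_i > α (w_𝒜ᵀ P) e_i` for every `i`, then there exists a probability vector `v`
such that the standard PageRank coincides with the node-dependent restart PageRank: `π` is
simultaneously the (unique) probability vector fixed by `𝒜P + (I-𝒜) e wᵀ` and by
`αP + (1-α) e vᵀ`. -/
theorem npr_realized_by_standard_pagerank {N : ℕ} (P : Matrix (Fin N) (Fin N) ℝ)
    (hP : IsStochastic P) (a : Fin N → ℝ) (ha : ∀ i, a i ∈ Set.Ioo (0 : ℝ) 1)
    (w : Fin N → ℝ) (hw : IsProbVec w) (α : ℝ) (hα : α ∈ Set.Ioo (0 : ℝ) 1)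
    (wA : Fin N → ℝ)
    (hwA : wA = Matrix.vecMul w ((1 : Matrix (Fin N) (Fin N) ℝ) - Matrix.diagonal a * P)⁻¹)
    (hcond : ∀ i, α * Matrix.vecMul wA P i < wA i) :
    ∃ v π : Fin N → ℝ, IsProbVec v ∧ IsProbVec π ∧
      Matrix.vecMul π (nprMatrix a P w) = π ∧
      Matrix.vecMul π (googleMatrix α P v) = π := by
  obtain ⟨hPnn, hProw⟩ := hP
  obtain ⟨hwpos, hwsum⟩ := hw
  obtain ⟨hα0, hα1⟩ := hα
  have hdet := det_one_sub_diag_mul_ne_zero P a hPnn hProw ha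
  have hvm : ∀ (x : Fin N → ℝ) (A : Matrix (Fin N) (Fin N) ℝ) (j : Fin N),
      Matrix.vecMul x A j = ∑ i, x i * A i j := by
    intro x A j
    simp [Matrix.vecMul, dotProduct]
  have hinv : Matrix.vecMul wA ((1 : Matrix (Fin N) (Fin N) ℝ) - Matrix.diagonal a * P) = w := by
    rw [hwA, Matrix.vecMul_vecMul, Matrix.nonsing_inv_mul _ (isUnit_iff_ne_zero.mpr hdet),
      Matrix.vecMul_one]
  have key : ∀ j, wA j = w j + ∑ i, wA i * (a i * P i j) := by
    intro j
    have hthis := congrFun hinv j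
    rw [hvm] at hthis
    have h2 : ∑ i, wA i * ((1 : Matrix (Fin N) (Fin N) ℝ) - Matrix.diagonal a * P) i j
        = wA j - ∑ i, wA i * (a i * P i j) := by
      rw [show (wA j : ℝ) = ∑ i, wA i * (if i = j then (1:ℝ) else 0) by simp,
        ← Finset.sum_sub_distrib]
      apply Finset.sum_congr rfl
      intro i _
      simp [Matrix.sub_apply, Matrix.one_apply, Matrix.diagonal_mul, mul_sub]
    rw [h2] at hthis
    linarith
  have hwAnn : ∀ i, 0 ≤ wA i := by
    by_contra hcon
    push_neg at hcon
    obtain ⟨i0, hi0⟩ := hcon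
    set S : Finset (Fin N) := Finset.univ.filter (fun i => wA i < 0) with hS
    have hSne : S.Nonempty := ⟨i0, by simp [hS, hi0]⟩
    have h1 : ∑ i ∈ S, wA i = ∑ i ∈ S, w i + ∑ k, wA k * a k * (∑ i ∈ S, P k i) := by
      rw [show ∑ i ∈ S, wA i = ∑ i ∈ S, (w i + ∑ k, wA k * (a k * P k i)) from
        Finset.sum_congr rfl (fun i _ => key i), Finset.sum_add_distrib]
      congr 1
      rw [Finset.sum_comm]
      apply Finset.sum_congr rfl
      intro k _
      rw [Finset.mul_sum]
      apply Finset.sum_congr rfl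
      intro i _
      ring
    have h2 : ∑ k ∈ S, wA k * a k * (∑ i ∈ S, P k i) ≤ ∑ k, wA k * a k * (∑ i ∈ S, P k i) := by
      apply Finset.sum_le_sum_of_subset_of_nonneg (Finset.subset_univ S)
      intro k _ hk
      have hwk : 0 ≤ wA k := by
        by_contra h
        exact hk (by simp only [hS, Finset.mem_filter, Finset.mem_univ, true_and]; linarith)
      have ht0 : 0 ≤ ∑ i ∈ S, P k i := Finset.sum_nonneg (fun i _ => hPnn k i)
      exact mul_nonneg (mul_nonneg hwk (ha k).1.le) ht0
    have h3 : ∀ k ∈ S, wA k < wA k * a k * (∑ i ∈ S, P k i) := by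
      intro k hk
      have hwk : wA k < 0 := by
        simpa only [hS, Finset.mem_filter, Finset.mem_univ, true_and] using hk
      have hak := ha k
      have ht1 : ∑ i ∈ S, P k i ≤ 1 := by
        have h7 := Finset.sum_le_sum_of_subset_of_nonneg (Finset.subset_univ S)
          (fun i _ _ => hPnn k i)
        rw [hProw k] at h7
        exact h7
      have ht0 : 0 ≤ ∑ i ∈ S, P k i := Finset.sum_nonneg (fun i _ => hPnn k i)
      have c0 : wA k * a k < 0 := mul_neg_of_neg_of_pos hwk hak.1
      have e1 : wA k * a k ≤ wA k * a k * (∑ i ∈ S, P k i) := by nlinarith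
      have e2 : wA k < wA k * a k := by nlinarith [hak.2]
      linarith
    have h4 : ∑ k ∈ S, wA k < ∑ k ∈ S, wA k * a k * (∑ i ∈ S, P k i) :=
      Finset.sum_lt_sum_of_nonempty hSne h3
    have h5 : 0 < ∑ i ∈ S, w i := Finset.sum_pos (fun i _ => hwpos i) hSne
    linarith
  have hwAge : ∀ i, w i ≤ wA i := by
    intro i
    have hnn : 0 ≤ ∑ k, wA k * (a k * P k i) :=
      Finset.sum_nonneg (fun k _ => mul_nonneg (hwAnn k)
        (mul_nonneg (ha k).1.le (hPnn k i)))
    have := key i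
    linarith
  have hwApos : ∀ i, 0 < wA i := fun i => lt_of_lt_of_le (hwpos i) (hwAge i)
  set s : ℝ := ∑ i, wA i with hs
  have hs1 : (1:ℝ) ≤ s := by
    rw [hs, ← hwsum]
    exact Finset.sum_le_sum (fun i _ => hwAge i)
  have hspos : (0:ℝ) < s := lt_of_lt_of_le one_pos hs1
  -- sum of wA * a
  have hsa : ∑ i, a i * wA i = s - 1 := by
    have hsum : s = 1 + ∑ i, a i * wA i := by
      rw [hs, show ∑ j, wA j = ∑ j, (w j + ∑ i, wA i * (a i * P i j)) from
        Finset.sum_congr rfl (fun j _ => key j), Finset.sum_add_distrib, hwsum]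
      congr 1
      rw [Finset.sum_comm]
      apply Finset.sum_congr rfl
      intro i _
      rw [← Finset.mul_sum, show ∑ j, a i * P i j = a i * ∑ j, P i j from Finset.mul_sum _ _ _ |>.symm,
        hProw i]
      ring
    linarith
  -- sum of vecMul wA P
  have hvp : ∑ j, Matrix.vecMul wA P j = s := by
    rw [show ∑ j, Matrix.vecMul wA P j = ∑ j, ∑ i, wA i * P i j from
      Finset.sum_congr rfl (fun j _ => hvm wA P j), Finset.sum_comm]
    rw [hs]
    apply Finset.sum_congr rfl
    intro i _
    rw [← Finset.mul_sum, hProw i, mul_one]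
  refine ⟨fun j => (wA j - α * Matrix.vecMul wA P j) / ((1 - α) * s),
    fun i => wA i / s, ⟨?_, ?_⟩, ⟨?_, ?_⟩, ?_, ?_⟩
  · intro i
    apply div_pos
    · linarith [hcond i]
    · have : (0:ℝ) < 1 - α := by linarith
      positivity
  · have hden : ((1:ℝ) - α) * s ≠ 0 := ne_of_gt (mul_pos (by linarith) hspos)
    have hnum : ∑ j, (wA j - α * Matrix.vecMul wA P j) = (1 - α) * s := by
      rw [Finset.sum_sub_distrib, ← Finset.mul_sum, hvp, ← hs]
      ring
    rw [← Finset.sum_div, hnum, div_self hden]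
  · intro i
    exact div_pos (hwApos i) hspos
  · have hsum : ∑ i, wA i / s = (∑ i, wA i) / s := (Finset.sum_div _ _ _).symm
    rw [hsum, ← hs, div_self (ne_of_gt hspos)]
  · funext j
    rw [hvm]
    have hentry : ∀ i, nprMatrix a P w i j = a i * P i j + (1 - a i) * w j := by
      intro i
      simp [nprMatrix, Matrix.add_apply, Matrix.sub_mul, Matrix.sub_apply,
        Matrix.diagonal_mul, Matrix.one_mul, mul_comm]
      ring
    calc ∑ i, wA i / s * nprMatrix a P w i j
        = (∑ i, wA i * (a i * P i j) + (∑ i, (1 - a i) * wA i) * w j) / s := by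
          rw [show (∑ i, wA i * (a i * P i j) + (∑ i, (1 - a i) * wA i) * w j)
            = ∑ i, (wA i * (a i * P i j) + ((1 - a i) * wA i) * w j) by
              rw [Finset.sum_add_distrib, Finset.sum_mul]]
          rw [Finset.sum_div]
          apply Finset.sum_congr rfl
          intro i _
          rw [hentry i]
          ring
      _ = wA j / s := by
          have h6 : ∑ i, (1 - a i) * wA i = 1 := by
            rw [show ∑ i, (1 - a i) * wA i = ∑ i, (wA i - a i * wA i) from
              Finset.sum_congr rfl (fun i _ => by ring), Finset.sum_sub_distrib, ← hs, hsa]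
            ring
          rw [h6, one_mul]
          congr 1
          linarith [key j]
  · funext j
    rw [hvm]
    have hentry : ∀ i, googleMatrix α P (fun j => (wA j - α * Matrix.vecMul wA P j) / ((1 - α) * s)) i j
        = α * P i j + (1 - α) * ((wA j - α * Matrix.vecMul wA P j) / ((1 - α) * s)) := by
      intro i
      simp [googleMatrix, Matrix.add_apply, Matrix.smul_apply, smul_eq_mul]
    have hna : (1:ℝ) - α ≠ 0 := by linarith
    calc ∑ i, wA i / s * googleMatrix α P (fun j => (wA j - α * Matrix.vecMul wA P j) / ((1 - α) * s)) i j
        = α * (∑ i, wA i * P i j) / s + (1 - α) * ((wA j - α * Matrix.vecMul wA P j) / ((1 - α) * s)) * (∑ i, wA i / s) := by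
          rw [show ∑ i, wA i / s * googleMatrix α P (fun j => (wA j - α * Matrix.vecMul wA P j) / ((1 - α) * s)) i j
            = ∑ i, (α * (wA i * P i j) / s + (1 - α) * ((wA j - α * Matrix.vecMul wA P j) / ((1 - α) * s)) * (wA i / s)) from
              Finset.sum_congr rfl (fun i _ => by rw [hentry i]; ring)]
          rw [Finset.sum_add_distrib, ← Finset.sum_div, ← Finset.mul_sum, ← Finset.mul_sum]
      _ = wA j / s := by
          rw [show (∑ i, wA i / s) = 1 by rw [← Finset.sum_div, ← hs, div_self (ne_of_gt hspos)]]
          rw [← hvm wA P j]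
          field_simp
          ring
end

section
/- Let P ∈ ℝ^{N×N} be a row-stochastic matrix, let α_1,...,α_N ∈ (0,1) with 𝒜 = diag(α_1,...,α_N), and let w be a probability vector. Then I_N − 𝒜P is invertible, the row vector x^T = w^T (I_N − 𝒜P)^{−1} has strictly positive entries, x^T satisfies x^T [𝒜P + (I_N − 𝒜) e w^T] = x^T, and consequently the node-dependent restart PageRank is given by π_NPR(𝒜,w) = x / (x^T e). -/
open Matrix

attribute [local instance] Matrix.linftyOpNormedRing Matrix.linftyOpNormedAlgebra

/-- Let `P` be row-stochastic, `a i ∈ (0,1)` dampings with `𝒜 = diag(a)`, and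
`w` a probability vector. Then `I - 𝒜P` is invertible, the row vector
`xᵀ = wᵀ (I - 𝒜P)⁻¹` has strictly positive entries, `x` satisfies
`xᵀ [𝒜P + (I-𝒜) e wᵀ] = xᵀ`, and the node-dependent restart PageRank is `x / (xᵀe)`:
the normalization of `x` is a probability vector fixed by `𝒜P + (I-𝒜) e wᵀ`. -/
theorem npr_explicit_formula {N : ℕ} (P : Matrix (Fin N) (Fin N) ℝ)
    (hP : IsStochastic P) (a : Fin N → ℝ) (ha : ∀ i, a i ∈ Set.Ioo (0 : ℝ) 1)
    (w : Fin N → ℝ) (hw : IsProbVec w)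
    (x : Fin N → ℝ)
    (hx : x = Matrix.vecMul w ((1 : Matrix (Fin N) (Fin N) ℝ) - Matrix.diagonal a * P)⁻¹) :
    IsUnit ((1 : Matrix (Fin N) (Fin N) ℝ) - Matrix.diagonal a * P) ∧
    (∀ i, 0 < x i) ∧
    Matrix.vecMul x (nprMatrix a P w) = x ∧
    (IsProbVec ((∑ i, x i)⁻¹ • x) ∧
      Matrix.vecMul ((∑ i, x i)⁻¹ • x) (nprMatrix a P w) = (∑ i, x i)⁻¹ • x) := by
  obtain ⟨hPnn, hPsum⟩ := hP
  obtain ⟨hwpos, hwsum⟩ := hw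
  haveI : Nonempty (Fin N) := by
    rcases Nat.eq_zero_or_pos N with h | h
    · subst h; simp at hwsum
    · exact ⟨⟨0, h⟩⟩
  set M : Matrix (Fin N) (Fin N) ℝ := Matrix.diagonal a * P with hMdef
  have hMentry : ∀ i j, M i j = a i * P i j := by
    intro i j; simp [hMdef, Matrix.diagonal_mul]
  have hMnn : ∀ i j, 0 ≤ M i j := fun i j => by
    rw [hMentry]; exact mul_nonneg (ha i).1.le (hPnn i j)
  have hMrow : ∀ i, ∑ j, M i j = a i := by
    intro i
    simp_rw [hMentry, ← Finset.mul_sum, hPsum i, mul_one]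
  -- norm bound
  have hnorm : ‖M‖ < 1 := by
    have hnn : ‖M‖₊ < 1 := by
      rw [Matrix.linfty_opNNNorm_def]
      refine (Finset.sup_lt_iff (by norm_num)).mpr fun i _ => ?_
      have hcoe : ((∑ j, ‖M i j‖₊ : NNReal) : ℝ) = a i := by
        rw [NNReal.coe_sum]
        simp_rw [coe_nnnorm, Real.norm_eq_abs]
        rw [← hMrow i]
        exact Finset.sum_congr rfl fun j _ => abs_of_nonneg (hMnn i j)
      rw [← NNReal.coe_lt_coe, hcoe]
      exact_mod_cast (ha i).2
    calc ‖M‖ = ((‖M‖₊ : NNReal) : ℝ) := (coe_nnnorm M).symm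
    _ < 1 := by exact_mod_cast hnn
  have hsummable : Summable fun n : ℕ => M ^ n := summable_geometric_of_norm_lt_one hnorm
  have hU : IsUnit (1 - M) := isUnit_one_sub_of_norm_lt_one hnorm
  have hinv : (1 - M)⁻¹ = ∑' n : ℕ, M ^ n :=
    Matrix.inv_eq_right_inv (mul_neg_geom_series M hnorm)
  -- nonneg powers
  have hMpow : ∀ (n : ℕ) (i j : Fin N), 0 ≤ (M ^ n) i j := by
    intro n
    induction n with
    | zero =>
      intro i j
      simp only [pow_zero, Matrix.one_apply]
      split_ifs <;> norm_num
    | succ n ih =>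
      intro i j
      rw [pow_succ, Matrix.mul_apply]
      exact Finset.sum_nonneg fun k _ => mul_nonneg (ih i k) (hMnn k j)
  -- positivity of x
  have hxpos : ∀ i, 0 < x i := by
    intro i
    let f : Matrix (Fin N) (Fin N) ℝ →ₗ[ℝ] ℝ :=
      { toFun := fun B => ∑ j, w j * B j i
        map_add' := fun B C => by
          simp [Matrix.add_apply, mul_add, Finset.sum_add_distrib]
        map_smul' := fun c B => by
          simp only [Matrix.smul_apply, smul_eq_mul, RingHom.id_apply, Finset.mul_sum]
          exact Finset.sum_congr rfl fun j _ => by ring }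
    have hfc : Continuous f := f.continuous_of_finiteDimensional
    have hmap : HasSum (fun n : ℕ => f (M ^ n)) (f (∑' n : ℕ, M ^ n)) :=
      hsummable.hasSum.map f.toAddMonoidHom hfc
    have hfx : x i = ∑' n : ℕ, f (M ^ n) := by
      have heq : (Matrix.vecMul w (∑' n : ℕ, M ^ n)) i = f (∑' n : ℕ, M ^ n) := by
        show _ = ∑ j, w j * (∑' n : ℕ, M ^ n) j i
        simp [Matrix.vecMul, dotProduct]
      rw [hx, hinv, heq, hmap.tsum_eq]
    have hterm : ∀ n, 0 ≤ f (M ^ n) := by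
      intro n
      show 0 ≤ ∑ j, w j * (M ^ n) j i
      exact Finset.sum_nonneg fun j _ => mul_nonneg (hwpos j).le (hMpow n j i)
    have h0 : f (M ^ 0) = w i := by
      simp [f, Matrix.one_apply, mul_ite]
    have hle : f (M ^ 0) ≤ ∑' n : ℕ, f (M ^ n) :=
      Summable.le_tsum hmap.summable 0 fun n _ => hterm n
    rw [hfx]
    calc (0 : ℝ) < w i := hwpos i
    _ = f (M ^ 0) := h0.symm
    _ ≤ _ := hle
  -- algebraic identities
  have hdet : IsUnit (1 - M).det := (Matrix.isUnit_iff_isUnit_det _).mp hU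
  have hxw : Matrix.vecMul x (1 - M) = w := by
    rw [hx, Matrix.vecMul_vecMul, Matrix.nonsing_inv_mul _ hdet, Matrix.vecMul_one]
  rw [Matrix.vecMul_sub, Matrix.vecMul_one] at hxw
  have hxM : ∀ j, Matrix.vecMul x M j = x j - w j := by
    intro j
    have := congrFun hxw j
    simp only [Pi.sub_apply] at this
    linarith
  have hsum1 : ∑ i, x i * (1 - a i) = 1 := by
    have h1 : ∑ j, Matrix.vecMul x M j = ∑ i, x i * a i := by
      simp only [Matrix.vecMul, dotProduct]
      rw [Finset.sum_comm]
      exact Finset.sum_congr rfl fun i _ => by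
        rw [← Finset.mul_sum, hMrow i]
    have h2 : ∑ j, Matrix.vecMul x M j = (∑ j, x j) - 1 := by
      simp_rw [hxM]
      rw [Finset.sum_sub_distrib, hwsum]
    simp_rw [mul_sub, mul_one, Finset.sum_sub_distrib]
    rw [← h1, h2]
    ring
  have hfix : Matrix.vecMul x (nprMatrix a P w) = x := by
    funext j
    have h2 : Matrix.vecMul x ((1 - Matrix.diagonal a) * Matrix.of fun _ j => w j) j = w j := by
      rw [← Matrix.vecMul_vecMul]
      set z := Matrix.vecMul x (1 - Matrix.diagonal a) with hz
      have hzi : ∀ i, z i = x i * (1 - a i) := by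
        intro i
        rw [hz, Matrix.vecMul_sub, Matrix.vecMul_one]
        simp [Matrix.vecMul_diagonal]
        ring
      have : Matrix.vecMul z (Matrix.of fun _ j => w j) j = (∑ i, z i) * w j := by
        simp [Matrix.vecMul, dotProduct, Finset.sum_mul]
      rw [this]
      simp_rw [hzi, hsum1, one_mul]
    rw [nprMatrix, Matrix.vecMul_add, Pi.add_apply, hxM j, h2]
    ring
  refine ⟨hU, hxpos, hfix, ⟨⟨?_, ?_⟩, ?_⟩⟩
  · intro i
    have hs : 0 < ∑ i, x i := Finset.sum_pos (fun i _ => hxpos i) Finset.univ_nonempty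
    simp only [Pi.smul_apply, smul_eq_mul]
    exact mul_pos (inv_pos.mpr hs) (hxpos i)
  · have hs : 0 < ∑ i, x i := Finset.sum_pos (fun i _ => hxpos i) Finset.univ_nonempty
    simp only [Pi.smul_apply, smul_eq_mul]
    rw [← Finset.mul_sum, inv_mul_cancel₀ hs.ne']
  · rw [Matrix.smul_vecMul, hfix]
end

section
/- Let P ∈ ℝ^{N×N} be a row-stochastic matrix and let α_1,...,α_N ∈ (0,1) with 𝒜 = diag(α_1,...,α_N). Then Y = I_N − 𝒜P is invertible, Y^{−1} has nonnegative entries, and Y^{−1} is strictly diagonally dominant of its column entries: (Y^{−1})_{ii} > (Y^{−1})_{ki} for all i and all k ≠ i; in particular, for each column i, max_k (Y^{−1})_{ki} = (Y^{−1})_{ii}. -/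
open Matrix

/-- For a row-stochastic `P` and dampings `a i ∈ (0,1)` with `𝒜 = diag(a)`,
`Y = I - 𝒜P` is invertible, `Y⁻¹` has nonnegative entries, and `Y⁻¹` is strictly
diagonally dominant of its column entries: `(Y⁻¹)_{ii} > (Y⁻¹)_{ki}` for all `i` and all
`k ≠ i`; in particular each column attains its maximum at the diagonal:
`(Y⁻¹)_{ki} ≤ (Y⁻¹)_{ii}` for all `k`. -/
theorem Yinv_strictly_column_diagonally_dominant {N : ℕ} (P : Matrix (Fin N) (Fin N) ℝ)
    (hP : IsStochastic P) (a : Fin N → ℝ) (ha : ∀ i, a i ∈ Set.Ioo (0 : ℝ) 1)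
    (Y : Matrix (Fin N) (Fin N) ℝ)
    (hY : Y = (1 : Matrix (Fin N) (Fin N) ℝ) - Matrix.diagonal a * P) :
    IsUnit Y ∧
    (∀ i j, 0 ≤ Y⁻¹ i j) ∧
    (∀ i k, k ≠ i → Y⁻¹ k i < Y⁻¹ i i) ∧
    (∀ i k, Y⁻¹ k i ≤ Y⁻¹ i i) := by
  obtain ⟨hPnn, hProw⟩ := hP
  have ha0 : ∀ i, 0 < a i := fun i => (ha i).1
  have ha1 : ∀ i, a i < 1 := fun i => (ha i).2
  have hP1 : ∀ i j, P i j ≤ 1 := by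
    intro i j
    calc P i j ≤ ∑ l, P i l := Finset.single_le_sum (fun l _ => hPnn i l) (Finset.mem_univ j)
    _ = 1 := hProw i
  have hYent : ∀ k j, Y k j = (if k = j then 1 else 0) - a k * P k j := by
    intro k j
    simp [hY, Matrix.sub_apply, Matrix.one_apply, Matrix.diagonal_mul]
  -- invertibility via strict row diagonal dominance
  have hdet : Y.det ≠ 0 := by
    apply det_ne_zero_of_sum_row_lt_diag
    intro k
    have h1 : ∑ j ∈ Finset.univ.erase k, ‖Y k j‖ = a k * (1 - P k k) := by
      have : ∀ j ∈ Finset.univ.erase k, ‖Y k j‖ = a k * P k j := by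
        intro j hj
        have hjk : k ≠ j := fun h => (Finset.mem_erase.mp hj).1 h.symm
        rw [hYent, if_neg hjk, zero_sub, norm_neg, Real.norm_eq_abs,
          abs_of_nonneg (mul_nonneg (ha0 k).le (hPnn k j))]
      rw [Finset.sum_congr rfl this]
      have := Finset.sum_erase_eq_sub (f := fun j => a k * P k j) (Finset.mem_univ k)
      rw [this, ← Finset.mul_sum, hProw k]
      ring
    have h2 : ‖Y k k‖ = 1 - a k * P k k := by
      rw [hYent, if_pos rfl, Real.norm_eq_abs, abs_of_nonneg]
      have : a k * P k k ≤ 1 :=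
        mul_le_one₀ (ha1 k).le (hPnn k k) (hP1 k k)
      linarith
    rw [h1, h2]
    nlinarith [ha0 k, ha1 k, hPnn k k, hP1 k k]
  have hunit : IsUnit Y := (Matrix.isUnit_iff_isUnit_det Y).mpr (isUnit_iff_ne_zero.mpr hdet)
  have hmul : Y * Y⁻¹ = 1 := Matrix.mul_nonsing_inv Y (isUnit_iff_ne_zero.mpr hdet)
  -- key entrywise equation
  have key : ∀ k i, Y⁻¹ k i - ∑ j, a k * P k j * Y⁻¹ j i = if k = i then 1 else 0 := by
    intro k i
    have := congrFun (congrFun hmul k) i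
    rw [Matrix.mul_apply, Matrix.one_apply] at this
    rw [← this]
    simp only [hYent, sub_mul, ite_mul, one_mul, zero_mul, Finset.sum_sub_distrib,
      Finset.sum_ite_eq, Finset.mem_univ, if_true]
  -- nonnegativity of Y⁻¹
  have hnn : ∀ i k, 0 ≤ Y⁻¹ k i := by
    intro i k
    by_contra hneg
    push_neg at hneg
    obtain ⟨m, -, hm⟩ := Finset.exists_min_image Finset.univ (fun j => Y⁻¹ j i)
      ⟨k, Finset.mem_univ k⟩
    have hmneg : Y⁻¹ m i < 0 := lt_of_le_of_lt (hm k (Finset.mem_univ k)) hneg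
    have hsum : a m * Y⁻¹ m i ≤ ∑ j, a m * P m j * Y⁻¹ j i := by
      have : ∑ j, a m * P m j * Y⁻¹ m i ≤ ∑ j, a m * P m j * Y⁻¹ j i := by
        apply Finset.sum_le_sum
        intro j _
        exact mul_le_mul_of_nonneg_left (hm j (Finset.mem_univ j))
          (mul_nonneg (ha0 m).le (hPnn m j))
      calc a m * Y⁻¹ m i = ∑ j, a m * P m j * Y⁻¹ m i := by
            rw [← Finset.sum_mul, ← Finset.mul_sum, hProw m, mul_one]
      _ ≤ _ := this
    have hk := key m i
    have hpos : (0:ℝ) ≤ if m = i then (1:ℝ) else 0 := by positivity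
    rw [← hk] at hpos
    nlinarith [ha1 m]
  -- diagonal entries ≥ 1
  have hdiag : ∀ i, (1:ℝ) ≤ Y⁻¹ i i := by
    intro i
    have hk := key i i
    rw [if_pos rfl] at hk
    have : 0 ≤ ∑ j, a i * P i j * Y⁻¹ j i :=
      Finset.sum_nonneg fun j _ => mul_nonneg (mul_nonneg (ha0 i).le (hPnn i j)) (hnn i j)
    linarith
  -- each column is maximized at the diagonal
  have hmax : ∀ i k, Y⁻¹ k i ≤ Y⁻¹ i i := by
    intro i k
    obtain ⟨m, -, hm⟩ := Finset.exists_max_image Finset.univ (fun j => Y⁻¹ j i)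
      ⟨i, Finset.mem_univ i⟩
    rcases eq_or_ne m i with rfl | hmi
    · exact hm k (Finset.mem_univ k)
    · exfalso
      have hk := key m i
      rw [if_neg hmi] at hk
      have hsum : ∑ j, a m * P m j * Y⁻¹ j i ≤ a m * Y⁻¹ m i := by
        have : ∑ j, a m * P m j * Y⁻¹ j i ≤ ∑ j, a m * P m j * Y⁻¹ m i := by
          apply Finset.sum_le_sum
          intro j _
          exact mul_le_mul_of_nonneg_left (hm j (Finset.mem_univ j))
            (mul_nonneg (ha0 m).le (hPnn m j))
        calc ∑ j, a m * P m j * Y⁻¹ j i ≤ ∑ j, a m * P m j * Y⁻¹ m i := this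
        _ = a m * Y⁻¹ m i := by rw [← Finset.sum_mul, ← Finset.mul_sum, hProw m, mul_one]
      have hC : (1:ℝ) ≤ Y⁻¹ m i := le_trans (hdiag i) (hm i (Finset.mem_univ i))
      nlinarith [ha1 m]
  -- strict dominance
  have hstrict : ∀ i k, k ≠ i → Y⁻¹ k i < Y⁻¹ i i := by
    intro i k hki
    have hk := key k i
    rw [if_neg hki, sub_eq_zero] at hk
    have hsum : ∑ j, a k * P k j * Y⁻¹ j i ≤ a k * Y⁻¹ i i := by
      have : ∑ j, a k * P k j * Y⁻¹ j i ≤ ∑ j, a k * P k j * Y⁻¹ i i :=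
        Finset.sum_le_sum fun j _ =>
          mul_le_mul_of_nonneg_left (hmax i j) (mul_nonneg (ha0 k).le (hPnn k j))
      calc ∑ j, a k * P k j * Y⁻¹ j i ≤ ∑ j, a k * P k j * Y⁻¹ i i := this
      _ = a k * Y⁻¹ i i := by rw [← Finset.sum_mul, ← Finset.mul_sum, hProw k, mul_one]
    have := hdiag i
    nlinarith [ha1 k]
  exact ⟨hunit, fun i j => hnn j i, hstrict, hmax⟩
end

section
/- Let P ∈ ℝ^{N×N} be a row-stochastic matrix, let α_1,...,α_N ∈ (0,1) with 𝒜 = diag(α_1,...,α_N), and let π_0 be a probability vector. If (π_0)_j > (max_i α_i) · (π_0^T P)_j for every j ∈ {1,...,N}, then there exists a probability vector w such that the node-dependent restart PageRank satisfies π_NPR(𝒜,w) = π_0; explicitly, one may take w^T = π_0^T (I_N − 𝒜P) / (π_0^T (I_N − 𝒜) e). -/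
open Matrix

/-- Let `P` be row-stochastic, `a i ∈ (0,1)` dampings with `𝒜 = diag(a)`, and
`π₀` a probability vector. If `(π₀)_j > (max_i a_i) · (π₀ᵀP)_j` for every `j`, then there
exists a probability vector `w` whose node-dependent restart PageRank is `π₀`; explicitly,
one may take `wᵀ = π₀ᵀ (I - 𝒜P) / (π₀ᵀ (I - 𝒜) e)`. -/
theorem npr_personalization_existence {N : ℕ} [NeZero N] (P : Matrix (Fin N) (Fin N) ℝ)
    (hP : IsStochastic P) (a : Fin N → ℝ) (ha : ∀ i, a i ∈ Set.Ioo (0 : ℝ) 1)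
    (π₀ : Fin N → ℝ) (hπ₀ : IsProbVec π₀)
    (hcond : ∀ j, (⨆ i, a i) * Matrix.vecMul π₀ P j < π₀ j) :
    ∃ w : Fin N → ℝ, IsProbVec w ∧
      Matrix.vecMul π₀ (nprMatrix a P w) = π₀ ∧
      w = (∑ i, π₀ i * (1 - a i))⁻¹ •
        Matrix.vecMul π₀ ((1 : Matrix (Fin N) (Fin N) ℝ) - Matrix.diagonal a * P) := by

  classical
  obtain ⟨hPpos, hProw⟩ := hP
  obtain ⟨hπpos, hπsum⟩ := hπ₀
  set c : ℝ := ∑ i, π₀ i * (1 - a i) with hc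
  have hcpos : 0 < c := by
    apply Finset.sum_pos
    · intro i _
      exact mul_pos (hπpos i) (by linarith [(ha i).2])
    · exact Finset.univ_nonempty
  set u : Fin N → ℝ := fun j => π₀ j - ∑ i, π₀ i * (a i * P i j) with hu
  have huvec : Matrix.vecMul π₀ ((1 : Matrix (Fin N) (Fin N) ℝ) - Matrix.diagonal a * P) = u := by
    funext j
    simp [Matrix.vecMul, dotProduct, Matrix.sub_apply, Matrix.one_apply,
      Matrix.mul_apply, Matrix.diagonal_apply, mul_sub, Finset.sum_sub_distrib, hu,
      Finset.sum_ite_eq', mul_assoc]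
  have hupos : ∀ j, 0 < u j := by
    intro j
    have hle : ∑ i, π₀ i * (a i * P i j) ≤ (⨆ i, a i) * Matrix.vecMul π₀ P j := by
      have : Matrix.vecMul π₀ P j = ∑ i, π₀ i * P i j := by
        simp [Matrix.vecMul, dotProduct]
      rw [this, Finset.mul_sum]
      apply Finset.sum_le_sum
      intro i _
      have hai : a i ≤ ⨆ i, a i := le_ciSup (Set.Finite.bddAbove (Set.finite_range a)) i
      have := mul_le_mul_of_nonneg_right hai
        (mul_nonneg (le_of_lt (hπpos i)) (hPpos i j))
      nlinarith [hπpos i, hPpos i j]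
    have := hcond j
    simp only [hu]
    linarith
  have husum : ∑ j, u j = c := by
    simp only [hu, Finset.sum_sub_distrib, hπsum]
    rw [Finset.sum_comm]
    have : ∀ i, ∑ j, π₀ i * (a i * P i j) = π₀ i * a i := by
      intro i
      rw [← Finset.mul_sum, ← Finset.mul_sum, hProw i, mul_one]
    simp only [this, hc]
    simp [mul_sub, Finset.sum_sub_distrib, hπsum]
  refine ⟨c⁻¹ • u, ⟨?_, ?_⟩, ?_, by rw [huvec]⟩
  · intro i
    exact mul_pos (inv_pos.mpr hcpos) (hupos i)
  · simp [← Finset.mul_sum, husum, inv_mul_cancel₀ (ne_of_gt hcpos)]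
  · funext j
    have hentry : ∀ i, nprMatrix a P (c⁻¹ • u) i j
        = a i * P i j + (1 - a i) * (c⁻¹ * u j) := by
      intro i
      simp [nprMatrix, Matrix.add_apply, Matrix.mul_apply, Matrix.sub_apply,
        Matrix.one_apply, Matrix.diagonal_apply, sub_mul, Finset.sum_sub_distrib,
        Finset.sum_ite_eq', smul_eq_mul]
    have : Matrix.vecMul π₀ (nprMatrix a P (c⁻¹ • u)) j
        = ∑ i, π₀ i * (a i * P i j + (1 - a i) * (c⁻¹ * u j)) := by
      simp [Matrix.vecMul, dotProduct, hentry]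
    rw [this]
    have : ∑ i, π₀ i * (a i * P i j + (1 - a i) * (c⁻¹ * u j))
        = (∑ i, π₀ i * (a i * P i j)) + c * (c⁻¹ * u j) := by
      rw [hc, Finset.sum_mul, ← Finset.sum_add_distrib]
      congr 1; funext i; ring
    have hcc : c * (c⁻¹ * u j) = u j := by
      field_simp
    rw [this, hcc]
    simp only [hu]; ring
end

section
/- Let P ∈ ℝ^{N×N} be a row-stochastic matrix and let α_1,...,α_N ∈ (0,1) with 𝒜 = diag(α_1,...,α_N). If 1/(max_k α_k) > max_j Σ_{i=1}^N P_{ij}, then ranking control holds for the node-dependent restart PageRank: for every strict total order ≺ on {1,...,N} there exists a probability vector w such that π_NPR(𝒜,w)_i < π_NPR(𝒜,w)_j whenever i ≺ j. -/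
/-!
Stationarity `π = π (𝒜P) + (π (I - 𝒜) e) wᵀ` can be solved for the restart vector `w`, and the
solution is a probability vector exactly when `π > π 𝒜P` entrywise. The hypothesis makes every
column sum of `𝒜P` smaller than `1`, so the uniform vector satisfies this strictly, and by
continuity so does `1 + ε • rank` for small `ε > 0`, where `rank i` counts the predecessors of
`i`. Normalizing it gives a `π` realizing the ranking.
-/

open Matrix

open Filter Topology Finset

theorem card_filter_rel_lt_card_filter_rel {ι : Type*} [Fintype ι] (r : ι → ι → Prop)
    [IsStrictOrder ι r] [DecidableRel r] {i j : ι} (hij : r i j) :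
    #{k | r k i} < #{k | r k j} := by
  refine Finset.card_lt_card (Finset.ssubset_iff_of_subset ?_ |>.2 ⟨i, ?_, ?_⟩)
  · intro k
    simp only [Finset.mem_filter, Finset.mem_univ, true_and]
    exact fun hki => _root_.trans hki hij
  · simpa using hij
  · simpa using irrefl i

theorem eventually_vecMul_one_add_smul_lt {ι : Type*} [Fintype ι] (B : Matrix ι ι ℝ)
    (hB : ∀ j, ∑ i, B i j < 1) (f : ι → ℝ) :
    ∀ᶠ ε in 𝓝 (0 : ℝ), ∀ j, 0 < (1 + ε • f) j ∧ ((1 + ε • f) ᵥ* B) j < (1 + ε • f) j := by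
  refine eventually_all.2 fun j => ?_
  have hcont : Continuous fun ε : ℝ => (1 + ε • f) j - ((1 + ε • f) ᵥ* B) j := by
    simp only [add_vecMul, smul_vecMul]
    fun_prop
  have hpos : Continuous fun ε : ℝ => (1 + ε • f) j := by fun_prop
  have hcont_zero : 0 < (1 + (0 : ℝ) • f) j - ((1 + (0 : ℝ) • f) ᵥ* B) j := by
    simpa [vecMul, dotProduct] using hB j
  have hpos_zero : 0 < (1 + (0 : ℝ) • f) j := by simp
  filter_upwards [(hcont.tendsto 0).eventually_const_lt hcont_zero,
    (hpos.tendsto 0).eventually_const_lt hpos_zero] with ε hε hε'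
  exact ⟨hε', sub_pos.1 hε⟩

theorem vecMul_nprMatrix {N : ℕ} (a : Fin N → ℝ) (P : Matrix (Fin N) (Fin N) ℝ)
    (w π : Fin N → ℝ) :
    π ᵥ* nprMatrix a P w = π ᵥ* (diagonal a * P) + (∑ i, (1 - a i) * π i) • w := by
  rw [nprMatrix, ← diagonal_one, diagonal_sub, vecMul_add]
  ext j
  simp [vecMul, dotProduct, diagonal_mul, Finset.mul_sum, mul_comm, mul_left_comm]

theorem sum_diagonal_mul_apply_lt_one {ι : Type*} [Fintype ι] [DecidableEq ι] [Nonempty ι]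
    (a : ι → ℝ) (ha : ∀ i, 0 < a i) (P : Matrix ι ι ℝ) (hP : ∀ i j, 0 ≤ P i j)
    (hcond : ∀ j, ∑ i, P i j < 1 / ⨆ k, a k) (j : ι) :
    ∑ i, (diagonal a * P) i j < 1 := by
  have ha_le : ∀ i, a i ≤ ⨆ k, a k := le_ciSup (Set.finite_range a).bddAbove
  have hsup : 0 < ⨆ k, a k := (ha (Classical.arbitrary ι)).trans_le (ha_le _)
  calc ∑ i, (diagonal a * P) i j = ∑ i, a i * P i j := by simp [diagonal_mul]
    _ ≤ ∑ i, (⨆ k, a k) * P i j := by gcongr with i; exacts [hP i j, ha_le i]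
    _ = (⨆ k, a k) * ∑ i, P i j := (Finset.mul_sum ..).symm
    _ < 1 := (lt_div_iff₀' hsup).1 (hcond j)

theorem isProbVec_inv_sum_smul {N : ℕ} [NeZero N] {v : Fin N → ℝ} (hv : ∀ i, 0 < v i) :
    IsProbVec ((∑ i, v i)⁻¹ • v) := by
  have hs : 0 < ∑ i, v i := Finset.sum_pos (fun i _ => hv i) univ_nonempty
  refine ⟨fun i => smul_pos (inv_pos.2 hs) (hv i), ?_⟩
  simp only [Pi.smul_apply, smul_eq_mul, ← Finset.mul_sum, inv_mul_cancel₀ hs.ne']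

theorem exists_isProbVec_vecMul_nprMatrix_eq {N : ℕ} (a : Fin N → ℝ) (ha : ∀ i, a i < 1)
    (P : Matrix (Fin N) (Fin N) ℝ) (hP : ∀ i, ∑ j, P i j = 1) {π : Fin N → ℝ}
    (hπ : IsProbVec π) (hlt : ∀ j, (π ᵥ* (diagonal a * P)) j < π j) :
    ∃ w, IsProbVec w ∧ π ᵥ* nprMatrix a P w = π := by
  set c := ∑ i, (1 - a i) * π i
  have hne : (univ : Finset (Fin N)).Nonempty :=
    Finset.nonempty_of_sum_ne_zero (hπ.2 ▸ one_ne_zero)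
  have hc : 0 < c := Finset.sum_pos (fun i _ => mul_pos (sub_pos.2 (ha i)) (hπ.1 i)) hne
  have hP1 : P *ᵥ 1 = 1 := funext fun i => by simp [mulVec, dotProduct, hP i]
  have hrow : ∑ j, (π ᵥ* (diagonal a * P)) j = ∑ i, a i * π i := by
    rw [← dotProduct_one, ← dotProduct_mulVec, ← mulVec_mulVec, hP1]
    simp [dotProduct, mulVec_diagonal, mul_comm]
  have hsum : ∑ j, (π - π ᵥ* (diagonal a * P)) j = c := by
    simp only [c, Pi.sub_apply, Finset.sum_sub_distrib, hrow, sub_mul, one_mul, hπ.2]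
  refine ⟨c⁻¹ • (π - π ᵥ* (diagonal a * P)), ⟨fun j => ?_, ?_⟩, ?_⟩
  · exact smul_pos (inv_pos.2 hc) (sub_pos.2 (hlt j))
  · simp only [Pi.smul_apply, smul_eq_mul, ← Finset.mul_sum, hsum, inv_mul_cancel₀ hc.ne']
  · rw [vecMul_nprMatrix, smul_smul, mul_inv_cancel₀ hc.ne', one_smul, add_sub_cancel]

/-- Let `P` be row-stochastic and `a i ∈ (0,1)` dampings with `𝒜 = diag(a)`.
If `1/(max_k a_k) > max_j ∑_i P_{ij}` (i.e. `∑_i P_{ij} < 1/(⨆ k, a k)` for every `j`),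
then ranking control holds for the node-dependent restart PageRank: for every strict total
order `≺` on the nodes there is a probability vector `w` whose node-dependent restart
PageRank `π` satisfies `π i < π j` whenever `i ≺ j`. -/
theorem npr_ranking_control {N : ℕ} [NeZero N] (P : Matrix (Fin N) (Fin N) ℝ)
    (hP : IsStochastic P) (a : Fin N → ℝ) (ha : ∀ i, a i ∈ Set.Ioo (0 : ℝ) 1)
    (hcond : ∀ j, ∑ i, P i j < 1 / (⨆ k, a k)) :
    ∀ r : Fin N → Fin N → Prop, IsStrictTotalOrder (Fin N) r →
      ∃ w π : Fin N → ℝ, IsProbVec w ∧ IsProbVec π ∧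
        Matrix.vecMul π (nprMatrix a P w) = π ∧
        ∀ i j, r i j → π i < π j := by
  classical
  intro r hr
  obtain ⟨hP_nonneg, hP_row⟩ := hP
  have hcol := sum_diagonal_mul_apply_lt_one a (fun i => (ha i).1) P hP_nonneg hcond
  let rank : Fin N → ℝ := fun i => #{k | r k i}
  obtain ⟨ε, hv, hε⟩ := ((eventually_vecMul_one_add_smul_lt _ hcol rank).filter_mono
    nhdsWithin_le_nhds |>.and (self_mem_nhdsWithin (s := Set.Ioi 0))).exists
  set v := 1 + ε • rank
  have hs_inv : 0 < (∑ i, v i)⁻¹ :=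
    inv_pos.2 (Finset.sum_pos (fun i _ => (hv i).1) univ_nonempty)
  obtain ⟨w, hw, hstat⟩ := exists_isProbVec_vecMul_nprMatrix_eq a (fun i => (ha i).2) P hP_row
    (isProbVec_inv_sum_smul fun i => (hv i).1) fun j => by
      simpa only [smul_vecMul, Pi.smul_apply, smul_eq_mul] using
        mul_lt_mul_of_pos_left (hv j).2 hs_inv
  refine ⟨w, _, hw, isProbVec_inv_sum_smul fun i => (hv i).1, hstat, fun i j hij => ?_⟩
  have hrank : rank i < rank j := Nat.cast_lt.2 (card_filter_rel_lt_card_filter_rel r hij)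
  simp only [Pi.smul_apply, smul_eq_mul, v, Pi.add_apply, Pi.one_apply]
  exact mul_lt_mul_of_pos_left (add_lt_add_right (mul_lt_mul_of_pos_left hrank hε) 1) hs_inv
end

section
/- Let P ∈ ℝ^{N×N} be a row-stochastic matrix, let α ∈ (0,1), let M ∈ ℝ^{N×N} be a row-stochastic matrix, and let π̃ be a probability vector satisfying π̃^T (αP + (1−α) M) = π̃^T. Define v = M^T π̃. Then v has nonnegative entries with Σ_i v_i = 1, and π̃^T (αP + (1−α) e v^T) = π̃^T; that is, every matrix-personalization PageRank vector is a standard PageRank vector with personalization vector v = M^T π̃. -/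
open Matrix

/-- Let `P` and `M` be row-stochastic, `α ∈ (0,1)`, and let `π̃` be a
probability vector with `π̃ᵀ (αP + (1-α)M) = π̃ᵀ`. Define `v = Mᵀπ̃`, i.e. `vᵀ = π̃ᵀM`.
Then `v` has nonnegative entries summing to 1, and `π̃ᵀ (αP + (1-α) e vᵀ) = π̃ᵀ`: every
matrix-personalization PageRank vector is a standard PageRank vector with personalization
vector `v = Mᵀπ̃`. -/
theorem matrix_personalization_is_standard {N : ℕ} (P M : Matrix (Fin N) (Fin N) ℝ)
    (hP : IsStochastic P) (hM : IsStochastic M)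
    (α : ℝ) (hα : α ∈ Set.Ioo (0 : ℝ) 1)
    (πt : Fin N → ℝ) (hπt : IsProbVec πt)
    (hfix : Matrix.vecMul πt (α • P + (1 - α) • M) = πt) :
    (∀ i, 0 ≤ Matrix.vecMul πt M i) ∧
    (∑ i, Matrix.vecMul πt M i = 1) ∧
    Matrix.vecMul πt (googleMatrix α P (Matrix.vecMul πt M)) = πt := by
  obtain ⟨hπpos, hπsum⟩ := hπt
  have hnn : ∀ i, 0 ≤ Matrix.vecMul πt M i := by
    intro i
    simp only [Matrix.vecMul, dotProduct]
    exact Finset.sum_nonneg fun j _ => mul_nonneg (hπpos j).le (hM.1 j i)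
  have hsum : ∑ i, Matrix.vecMul πt M i = 1 := by
    simp only [Matrix.vecMul, dotProduct]
    rw [Finset.sum_comm]
    calc ∑ j, ∑ i, πt j * M j i = ∑ j, πt j * ∑ i, M j i := by
          simp [Finset.mul_sum]
      _ = 1 := by simp [hM.2, hπsum]
  refine ⟨hnn, hsum, ?_⟩
  funext j
  have key : Matrix.vecMul πt (Matrix.of fun _ k => Matrix.vecMul πt M k) j
      = Matrix.vecMul πt M j := by
    simp only [Matrix.vecMul, dotProduct, Matrix.of_apply]
    rw [← Finset.sum_mul, hπsum, one_mul]
  have h := congrFun hfix j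
  simp only [googleMatrix, Matrix.vecMul, dotProduct, Matrix.add_apply,
    Matrix.smul_apply, Matrix.of_apply, smul_eq_mul, mul_add] at h ⊢
  rw [Finset.sum_add_distrib] at h ⊢
  rw [← Finset.sum_mul, hπsum, one_mul]
  have h2 : ∑ x, πt x * ((1 - α) * M x j) = (1 - α) * ∑ x, πt x * M x j := by
    rw [Finset.mul_sum]; exact Finset.sum_congr rfl fun x _ => by ring
  linarith [h, h2]
end

section
/- Let P ∈ ℝ^{N×N} be a row-stochastic matrix and fix α ∈ (0,1). For each node i, define PR(i) = { π(α,v)_i : v a probability vector } and MPR(i) = { π̃_i : M an entrywise strictly positive row-stochastic matrix and π̃ the unique probability vector with π̃^T (αP + (1−α) M) = π̃^T }. Then MPR(i) = PR(i) for every node i. -/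
open Matrix

/-- Let `P` be row-stochastic and `α ∈ (0,1)`. For each node `i`, the set of
attainable matrix-personalization PageRank values
`MPR(i) = { π̃_i : M entrywise positive row-stochastic, π̃ the probability vector with
π̃ᵀ(αP + (1-α)M) = π̃ᵀ }` equals the set of attainable standard PageRank values
`PR(i) = { π(α,v)_i : v a probability vector }`. -/
theorem mpr_localization_eq_pr_localization {N : ℕ} (P : Matrix (Fin N) (Fin N) ℝ)
    (hP : IsStochastic P) (α : ℝ) (hα : α ∈ Set.Ioo (0 : ℝ) 1) :
    ∀ i : Fin N,
      {x : ℝ | ∃ (M : Matrix (Fin N) (Fin N) ℝ) (πt : Fin N → ℝ),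
          (∀ k l, 0 < M k l) ∧ IsStochastic M ∧ IsProbVec πt ∧
          Matrix.vecMul πt (α • P + (1 - α) • M) = πt ∧ πt i = x}
        = {x : ℝ | ∃ v π : Fin N → ℝ, IsProbVec v ∧ IsProbVec π ∧
            Matrix.vecMul π (googleMatrix α P v) = π ∧ π i = x} := by
  intro i
  ext x
  simp only [Set.mem_setOf_eq]
  constructor
  · rintro ⟨M, πt, hMpos, hMs, hπt, hfix, rfl⟩
    refine ⟨Matrix.vecMul πt M, πt, ⟨?_, ?_⟩, hπt, ?_, rfl⟩
    · intro j
      simp only [Matrix.vecMul, dotProduct]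
      exact Finset.sum_pos (fun k _ => mul_pos (hπt.1 k) (hMpos k j))
        ⟨j, Finset.mem_univ j⟩
    · simp only [Matrix.vecMul, dotProduct]
      rw [Finset.sum_comm]
      calc ∑ k, ∑ j, πt k * M k j = ∑ k, πt k * ∑ j, M k j := by
            simp [Finset.mul_sum]
        _ = 1 := by simp [hMs.2, hπt.2]
    · have hsum : ∑ k, πt k = 1 := hπt.2
      have key : Matrix.vecMul πt (googleMatrix α P (Matrix.vecMul πt M))
          = Matrix.vecMul πt (α • P + (1 - α) • M) := by
        funext j
        simp only [googleMatrix, Matrix.vecMul, dotProduct, Matrix.add_apply,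
          Matrix.smul_apply, Matrix.of_apply, smul_eq_mul]
        simp only [mul_add, Finset.sum_add_distrib]
        congr 1
        rw [← Finset.sum_mul, hsum, one_mul, Finset.mul_sum]
        exact Finset.sum_congr rfl fun k _ => by ring
      rw [key, hfix]
  · rintro ⟨v, π, hv, hπ, hfix, rfl⟩
    exact ⟨Matrix.of fun _ j => v j, π, fun k l => hv.1 l,
      ⟨fun k l => (hv.1 l).le, fun k => hv.2⟩, hπ, hfix, rfl⟩
end

section
/- Let P ∈ ℝ^{N×N} be a row-stochastic matrix and fix α ∈ (0,1). Then: (a) a probability vector π_0 is attainable as the standard PageRank π(α,v) for some probability vector v if and only if it is attainable as the matrix-personalization PageRank for some entrywise strictly positive row-stochastic matrix M (complete control equivalence); and (b) for every strict total order ≺ on {1,...,N}, there exists a probability vector v whose standard PageRank π(α,v) satisfies π_i < π_j whenever i ≺ j if and only if there exists an entrywise strictly positive row-stochastic matrix M whose matrix-personalization PageRank π̃ satisfies π̃_i < π̃_j whenever i ≺ j (ranking control equivalence). -/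
open Matrix

lemma vecMul_split {N : ℕ} (α : ℝ) (π : Fin N → ℝ) (A B : Matrix (Fin N) (Fin N) ℝ) :
    Matrix.vecMul π (α • A + (1 - α) • B)
      = α • Matrix.vecMul π A + (1 - α) • Matrix.vecMul π B := by
  funext j
  simp only [Matrix.vecMul, dotProduct, Matrix.add_apply, Matrix.smul_apply,
    Pi.add_apply, Pi.smul_apply, smul_eq_mul, Finset.mul_sum]
  rw [← Finset.sum_add_distrib]
  apply Finset.sum_congr rfl
  intro i _
  ring

lemma vecMul_ones {N : ℕ} (π v : Fin N → ℝ) (hπ : ∑ i, π i = 1) :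
    Matrix.vecMul π (Matrix.of fun _ j => v j) = v := by
  funext j
  simp only [Matrix.vecMul, dotProduct, Matrix.of_apply]
  rw [← Finset.sum_mul, hπ, one_mul]

/-- Key helper: from a matrix-personalization fixed point, extract a vector
personalization giving the same PageRank. -/
lemma backward_step {N : ℕ} (P : Matrix (Fin N) (Fin N) ℝ) (α : ℝ)
    (M : Matrix (Fin N) (Fin N) ℝ) (π : Fin N → ℝ)
    (hMpos : ∀ k l, 0 < M k l) (hM : IsStochastic M) (hπ : IsProbVec π)
    (hfix : Matrix.vecMul π (α • P + (1 - α) • M) = π) :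
    ∃ v : Fin N → ℝ, IsProbVec v ∧ Matrix.vecMul π (googleMatrix α P v) = π := by
  refine ⟨Matrix.vecMul π M, ⟨?_, ?_⟩, ?_⟩
  · intro j
    have hne : (Finset.univ : Finset (Fin N)).Nonempty := by
      apply Finset.nonempty_of_sum_ne_zero (f := π)
      rw [hπ.2]; norm_num
    simp only [Matrix.vecMul, dotProduct]
    exact Finset.sum_pos (fun i _ => mul_pos (hπ.1 i) (hMpos i j)) hne
  · simp only [Matrix.vecMul, dotProduct]
    rw [Finset.sum_comm]
    calc ∑ i, ∑ j, π i * M i j = ∑ i, π i * ∑ j, M i j := by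
          simp [Finset.mul_sum]
      _ = ∑ i, π i := by
          apply Finset.sum_congr rfl
          intro i _
          rw [hM.2 i, mul_one]
      _ = 1 := hπ.2
  · rw [googleMatrix, vecMul_split, vecMul_ones π _ hπ.2, ← vecMul_split, hfix]

/-- Let `P` be row-stochastic and `α ∈ (0,1)`. (a) A probability vector `π₀`
is attainable as the standard PageRank `π(α,v)` for some probability vector `v` iff it is
attainable as the matrix-personalization PageRank for some entrywise strictly positive
row-stochastic `M` (complete control equivalence). (b) For every strict total order `≺` on
the nodes, a standard PageRank vector realizing the ranking exists iff a
matrix-personalization PageRank vector realizing the ranking exists (ranking control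
equivalence). -/
theorem mpr_pr_control_equivalence {N : ℕ} (P : Matrix (Fin N) (Fin N) ℝ)
    (hP : IsStochastic P) (α : ℝ) (hα : α ∈ Set.Ioo (0 : ℝ) 1) :
    (∀ π₀ : Fin N → ℝ, IsProbVec π₀ →
      ((∃ v : Fin N → ℝ, IsProbVec v ∧ Matrix.vecMul π₀ (googleMatrix α P v) = π₀) ↔
        (∃ M : Matrix (Fin N) (Fin N) ℝ, (∀ k l, 0 < M k l) ∧ IsStochastic M ∧
          Matrix.vecMul π₀ (α • P + (1 - α) • M) = π₀))) ∧
    (∀ r : Fin N → Fin N → Prop, IsStrictTotalOrder (Fin N) r →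
      ((∃ v π : Fin N → ℝ, IsProbVec v ∧ IsProbVec π ∧
          Matrix.vecMul π (googleMatrix α P v) = π ∧ ∀ i j, r i j → π i < π j) ↔
        (∃ (M : Matrix (Fin N) (Fin N) ℝ) (πt : Fin N → ℝ),
          (∀ k l, 0 < M k l) ∧ IsStochastic M ∧ IsProbVec πt ∧
          Matrix.vecMul πt (α • P + (1 - α) • M) = πt ∧
          ∀ i j, r i j → πt i < πt j))) := by
  constructor
  · intro π₀ hπ₀
    constructor
    · rintro ⟨v, hv, hfix⟩
      exact ⟨Matrix.of fun _ j => v j, fun k l => hv.1 l,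
        ⟨fun i j => (hv.1 j).le, fun i => hv.2⟩, hfix⟩
    · rintro ⟨M, hMpos, hM, hfix⟩
      exact backward_step P α M π₀ hMpos hM hπ₀ hfix
  · intro r _
    constructor
    · rintro ⟨v, π, hv, hπ, hfix, hrank⟩
      exact ⟨Matrix.of fun _ j => v j, π, fun k l => hv.1 l,
        ⟨fun i j => (hv.1 j).le, fun i => hv.2⟩, hπ, hfix, hrank⟩
    · rintro ⟨M, πt, hMpos, hM, hπt, hfix, hrank⟩
      obtain ⟨v, hv, hfix'⟩ := backward_step P α M πt hMpos hM hπt hfix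
      exact ⟨v, πt, hv, hπt, hfix', hrank⟩
end
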